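/- For every q ≥ 2 there exists a graph G on 3(q+1) vertices that is the edge-disjoint union of q+1 spanning trees and has three vertices u₀, v₀, w₀ spanning a triangle such that each of u₀, v₀, w₀ has degree exactly q+2 in G. -/

import Mathlib

/-!
Take a spine of `n = 3q` vertices `0, …, n-1`, read cyclically, and a triangle `{n, n+1, n+2}`.
Tree `k ≤ q` consists of the zigzag path `k, k+1, k-1, k+2, k-2, …` through the spine, whose edges
`{x, y}` are exactly those with `x + y ≡ 2k` or `2k+1 (mod n)`, together with the triangle edge
from `n+k` to its cyclic successor (when `k < 3`) and edges from the other triangle vertices to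
the root `k`. Since `2q + 1 < 3q`, the sum of the endpoints of a spine edge determines its tree,
so the trees are edge-disjoint. A triangle vertex `n+s` is adjacent to the other two triangle
vertices and to the `q` roots `k ≠ s`, hence has degree `q + 2`. Each tree is described by a
parent map which strictly decreases a rank (the position along the path) until the root `k`.
-/

namespace SimpleGraph

variable {V : Type*}

def parentGraph (P : V → V) : SimpleGraph V := fromRel fun x y => P x = y

section
variable {P : V → V} {r : V} {rank : V → ℕ}

lemma parentGraph_adj_iff {a b : V} : (parentGraph P).Adj a b ↔ a ≠ b ∧ (P a = b ∨ P b = a) :=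
  fromRel_adj ..

lemma parentGraph_adj_parent {v : V} (hv : P v ≠ v) : (parentGraph P).Adj v (P v) :=
  parentGraph_adj_iff.2 ⟨hv.symm, .inl rfl⟩

lemma eq_parent_of_parentGraph_adj (hr : P r = r) (hP : ∀ v ≠ r, rank (P v) < rank v) {a b : V}
    (h : (parentGraph P).Adj a b) (hba : rank b ≤ rank a) : P a = b := by
  obtain ⟨hab, rfl | rfl⟩ := parentGraph_adj_iff.1 h
  · rfl
  · have hb : b ≠ r := by rintro rfl; exact hab hr
    exact absurd (hP b hb) hba.not_gt

lemma connected_parentGraph (hP : ∀ v ≠ r, rank (P v) < rank v) :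
    (parentGraph P).Connected := by
  have reach : ∀ v, (parentGraph P).Reachable v r := by
    intro v
    induction hv : rank v using Nat.strong_induction_on generalizing v with
    | _ n ih =>
      by_cases hvr : v = r
      · rw [hvr]
      · have hPv : P v ≠ v := fun h => (hP v hvr).ne (by rw [h])
        exact (parentGraph_adj_parent hPv).reachable.trans (ih _ (hv ▸ hP v hvr) _ rfl)
  have : Nonempty V := ⟨r⟩
  exact ⟨fun u v => (reach u).trans (reach v).symm⟩

/-- Both cycle neighbours of a vertex of maximal rank on a cycle would be its parent. -/
lemma isAcyclic_parentGraph (hr : P r = r) (hP : ∀ v ≠ r, rank (P v) < rank v) :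
    (parentGraph P).IsAcyclic := by
  classical
  intro u c hc
  obtain ⟨x, hx, hmax⟩ := c.support.toFinset.exists_max_image rank ⟨u, by simp⟩
  rw [List.mem_toFinset] at hx
  set c' := c.rotate x hx
  have hc' : c'.IsCycle := hc.rotate hx
  have hmax' : ∀ y ∈ c'.support, rank y ≤ rank x := by
    intro y hy
    rcases c'.mem_support_iff.1 hy with rfl | hy
    · exact le_rfl
    · exact hmax y <| List.mem_toFinset.2 <|
        List.mem_of_mem_tail ((c.support_rotate x hx).mem_iff.1 hy)
  have hsnd := eq_parent_of_parentGraph_adj hr hP (c'.adj_snd hc'.not_nil)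
    (hmax' _ (c'.getVert_mem_support 1))
  have hpen := eq_parent_of_parentGraph_adj hr hP (c'.adj_penultimate hc'.not_nil).symm
    (hmax' _ (c'.getVert_mem_support _))
  exact hc'.snd_ne_penultimate (hsnd.symm.trans hpen)

theorem isTree_parentGraph (hr : P r = r) (hP : ∀ v ≠ r, rank (P v) < rank v) :
    (parentGraph P).IsTree :=
  ⟨connected_parentGraph hP, isAcyclic_parentGraph hr hP⟩

end
end SimpleGraph

/-- `(x - k) mod n`, for `k, x < n`. -/
def cyclicOffset (n k x : ℕ) : ℕ := if k ≤ x then x - k else x + n - k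

/-- The zigzag path `k, k+1, k-1, k+2, k-2, …` visits `k + t` at position `2t - 1` and
`k - t` at position `2t`. `zigzagRank` is the position and `zigzagParent` the predecessor on the
path; truncated subtraction makes `k` its own parent and gives it rank `0`. -/
def zigzagParent (n k x : ℕ) : ℕ :=
  if cyclicOffset n k x ≤ n / 2 then
    if cyclicOffset n k x - 1 ≤ k then k - (cyclicOffset n k x - 1)
    else k + n - (cyclicOffset n k x - 1)
  else k + (n - cyclicOffset n k x)

def zigzagRank (n k x : ℕ) : ℕ :=
  if cyclicOffset n k x ≤ n / 2 then 2 * cyclicOffset n k x - 1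
  else 2 * (n - cyclicOffset n k x)

section
variable {n k x : ℕ}

lemma zigzagParent_self : zigzagParent n k k = k := by
  simp [zigzagParent, cyclicOffset]

lemma zigzagRank_self : zigzagRank n k k = 0 := by
  simp [zigzagRank, cyclicOffset]

lemma zigzagParent_lt (hk : 2 * k < n) (hx : x < n) : zigzagParent n k x < n := by
  simp only [zigzagParent, cyclicOffset]; split_ifs <;> omega

lemma zigzagRank_lt (hk : k < n) : zigzagRank n k x < n := by
  simp only [zigzagRank, cyclicOffset]; split_ifs <;> omega

lemma zigzagRank_parent_lt (hk : 2 * k < n) (hx : x < n) (hxk : x ≠ k) :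
    zigzagRank n k (zigzagParent n k x) < zigzagRank n k x := by
  simp only [zigzagRank, zigzagParent, cyclicOffset]; split_ifs <;> omega

lemma add_zigzagParent (hk : 2 * k < n) (hx : x < n) :
    x + zigzagParent n k x ∈ ({2 * k, 2 * k + 1, 2 * k + n, 2 * k + 1 + n} : Finset ℕ) := by
  simp only [zigzagParent, cyclicOffset, Finset.mem_insert, Finset.mem_singleton]
  split_ifs <;> omega
end

open SimpleGraph Finset

/-- Vertices `0, …, 3q-1` form the spine and `3q, 3q+1, 3q+2` the triangle. -/
def treeParent (q k v : ℕ) : ℕ :=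
  if v < 3 * q then zigzagParent (3 * q) k v
  else if v = 3 * q + k then (if v = 3 * q + 2 then 3 * q else v + 1)
  else k

def treeRank (q k v : ℕ) : ℕ :=
  if v < 3 * q then zigzagRank (3 * q) k v
  else if v = 3 * q + k then 3 * q + 1
  else 3 * q

def treeIndexOfEdge (q a b : ℕ) : ℕ :=
  if a < 3 * q ∧ b < 3 * q then
    (if a + b < 3 * q then (a + b) / 2 else (a + b - 3 * q) / 2)
  else if a < 3 * q then a
  else if b < 3 * q then b
  else if b = a + 1 ∨ a = b + 2 then a - 3 * q
  else b - 3 * q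

section
variable {q k v : ℕ}

lemma treeParent_lt (hk : k ≤ q) (hv : v < 3 * (q + 1)) : treeParent q k v < 3 * (q + 1) := by
  have := zigzagParent_lt (n := 3 * q) (k := k) (x := v)
  simp only [treeParent]; split_ifs <;> omega

lemma treeParent_root (hq : 0 < q) (hk : k ≤ q) : treeParent q k k = k := by
  simp [treeParent, zigzagParent_self, show k < 3 * q by omega]

lemma treeRank_treeParent_lt (hq : 0 < q) (hk : k ≤ q) (hv : v < 3 * (q + 1)) (hvk : v ≠ k) :
    treeRank q k (treeParent q k v) < treeRank q k v := by
  have := zigzagRank_parent_lt (n := 3 * q) (k := k) (x := v)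
  have := zigzagRank_lt (n := 3 * q) (k := k) (x := zigzagParent (3 * q) k v)
  have := zigzagParent_lt (n := 3 * q) (k := k) (x := v)
  have : zigzagRank (3 * q) k k = 0 := zigzagRank_self
  simp only [treeRank, treeParent]
  split_ifs <;> omega

lemma treeIndexOfEdge_comm {a b : ℕ} (ha : a < 3 * (q + 1)) (hb : b < 3 * (q + 1)) :
    treeIndexOfEdge q a b = treeIndexOfEdge q b a := by
  simp only [treeIndexOfEdge]; split_ifs <;> omega

lemma treeIndexOfEdge_treeParent (hq : 2 ≤ q) (hk : k ≤ q) (hv : v < 3 * (q + 1)) :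
    treeIndexOfEdge q v (treeParent q k v) = k := by
  have := add_zigzagParent (n := 3 * q) (k := k) (x := v)
  simp only [Finset.mem_insert, Finset.mem_singleton] at this
  have := zigzagParent_lt (n := 3 * q) (k := k) (x := v)
  simp only [treeIndexOfEdge, treeParent]
  split_ifs <;> omega
end

def zigzagTree (q : ℕ) (k : Fin (q + 1)) : SimpleGraph (Fin (3 * (q + 1))) :=
  parentGraph fun v => ⟨treeParent q k v, treeParent_lt (Nat.lt_succ_iff.1 k.isLt) v.isLt⟩

section
variable {q : ℕ}

lemma zigzagTree_adj_iff {k : Fin (q + 1)} {a b : Fin (3 * (q + 1))} :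
    (zigzagTree q k).Adj a b ↔
      (a : ℕ) ≠ b ∧ (treeParent q k a = b ∨ treeParent q k b = a) := by
  simp only [zigzagTree, parentGraph_adj_iff, ne_eq, Fin.ext_iff]

lemma zigzagTree_isTree (hq : 0 < q) (k : Fin (q + 1)) : (zigzagTree q k).IsTree := by
  have hk : (k : ℕ) ≤ q := Nat.lt_succ_iff.1 k.isLt
  exact isTree_parentGraph (r := ⟨k, by omega⟩) (rank := fun v => treeRank q k v)
    (Fin.ext (treeParent_root hq hk))
    (fun v hv => treeRank_treeParent_lt hq hk v.isLt (fun h => hv (Fin.ext h)))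

lemma treeIndexOfEdge_of_zigzagTree_adj (hq : 2 ≤ q) {k : Fin (q + 1)} {a b : Fin (3 * (q + 1))}
    (h : (zigzagTree q k).Adj a b) : treeIndexOfEdge q a b = k := by
  obtain ⟨-, h | h⟩ := zigzagTree_adj_iff.1 h
  · rw [← h]
    exact treeIndexOfEdge_treeParent hq (by omega) a.isLt
  · rw [treeIndexOfEdge_comm a.isLt b.isLt, ← h]
    exact treeIndexOfEdge_treeParent hq (by omega) b.isLt

lemma pairwise_disjoint_edgeSet_zigzagTree (hq : 2 ≤ q) :
    Pairwise fun i j => Disjoint (zigzagTree q i).edgeSet (zigzagTree q j).edgeSet := by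
  intro i j hij
  rw [Set.disjoint_left]
  rintro ⟨a, b⟩ hi hj
  exact hij (Fin.ext ((treeIndexOfEdge_of_zigzagTree_adj hq hi).symm.trans
    (treeIndexOfEdge_of_zigzagTree_adj hq hj)))

lemma iSup_zigzagTree_adj_triangle_iff (hq : 2 ≤ q) {s : ℕ} (hs : s < 3) (b : Fin (3 * (q + 1))) :
    (⨆ k, zigzagTree q k).Adj ⟨3 * q + s, by omega⟩ b ↔
      (b.val ≤ q ∧ b.val ≠ s) ∨ (3 * q ≤ b.val ∧ b.val ≠ 3 * q + s) := by
  rw [iSup_adj]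
  constructor
  · rintro ⟨k, hk⟩
    have := k.isLt
    have := zigzagParent_lt (n := 3 * q) (k := k) (x := b)
    obtain ⟨hne, h | h⟩ := zigzagTree_adj_iff.1 hk <;>
    · simp only [treeParent] at h hne
      split_ifs at h <;> omega
  · rintro (⟨hb, hbs⟩ | ⟨hb, hbs⟩)
    · refine ⟨⟨b, by omega⟩, zigzagTree_adj_iff.2 ⟨by simp only; omega, .inl ?_⟩⟩
      simp only [treeParent]; split_ifs <;> omega
    · by_cases hsucc : (b : ℕ) = 3 * q + s + 1 ∨ (s = 2 ∧ (b : ℕ) = 3 * q)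
      · refine ⟨⟨s, by omega⟩, zigzagTree_adj_iff.2 ⟨by simp only; omega, .inl ?_⟩⟩
        simp only [treeParent]; split_ifs <;> omega
      · refine ⟨⟨b - 3 * q, by omega⟩, zigzagTree_adj_iff.2 ⟨by simp only; omega, .inr ?_⟩⟩
        simp only [treeParent]; split_ifs <;> omega

lemma ncard_neighborSet_triangle (hq : 2 ≤ q) {s : ℕ} (hs : s < 3) :
    ((⨆ k, zigzagTree q k).neighborSet ⟨3 * q + s, by omega⟩).ncard = q + 2 := by
  have hN : (⨆ k, zigzagTree q k).neighborSet ⟨3 * q + s, by omega⟩ =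
      Fin.val ⁻¹' ↑(((range (q + 1)).erase s) ∪ ((Ico (3 * q) (3 * q + 3)).erase (3 * q + s))) := by
    ext b
    simp only [mem_neighborSet, iSup_zigzagTree_adj_triangle_iff hq hs, Set.mem_preimage,
      coe_union, Set.mem_union, mem_coe, mem_erase, mem_range, mem_Ico]
    omega
  have hdisj :
      Disjoint ((range (q + 1)).erase s) ((Ico (3 * q) (3 * q + 3)).erase (3 * q + s)) := by
    rw [Finset.disjoint_left]
    intro x hx hx'
    simp only [mem_erase, mem_range, mem_Ico] at hx hx'
    omega
  rw [hN, Set.ncard_preimage_of_injective_subset_range Fin.val_injective, Set.ncard_coe_finset,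
    card_union_of_disjoint hdisj, card_erase_of_mem (mem_range.2 (by omega)),
    card_erase_of_mem (mem_Ico.2 ⟨by omega, by omega⟩), card_range, Nat.card_Ico]
  · omega
  · intro x hx
    simp only [coe_union, Set.mem_union, mem_coe, mem_erase, mem_range, mem_Ico] at hx
    exact ⟨⟨x, by omega⟩, rfl⟩
end

/-- For every `q ≥ 2` there exists a graph `G` on `3(q+1)` vertices that is the
edge-disjoint union of `q+1` spanning trees and has three vertices `u₀, v₀, w₀`
spanning a triangle, each of degree exactly `q+2` in `G`. -/
theorem stmt5 (q : ℕ) (hq : 2 ≤ q) :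
    ∃ (G : SimpleGraph (Fin (3 * (q + 1))))
      (T : Fin (q + 1) → SimpleGraph (Fin (3 * (q + 1))))
      (u₀ v₀ w₀ : Fin (3 * (q + 1))),
      (∀ i, (T i).IsTree) ∧
      (Pairwise fun i j => Disjoint (T i).edgeSet (T j).edgeSet) ∧
      (⨆ i, T i) = G ∧
      u₀ ≠ v₀ ∧ v₀ ≠ w₀ ∧ u₀ ≠ w₀ ∧
      G.Adj u₀ v₀ ∧ G.Adj v₀ w₀ ∧ G.Adj u₀ w₀ ∧
      (G.neighborSet u₀).ncard = q + 2 ∧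
      (G.neighborSet v₀).ncard = q + 2 ∧
      (G.neighborSet w₀).ncard = q + 2 := by
  have adj {s : ℕ} (hs : s < 3) := iSup_zigzagTree_adj_triangle_iff hq hs
  refine ⟨⨆ k, zigzagTree q k, zigzagTree q,
    ⟨3 * q + 0, by omega⟩, ⟨3 * q + 1, by omega⟩, ⟨3 * q + 2, by omega⟩,
    zigzagTree_isTree (by omega), pairwise_disjoint_edgeSet_zigzagTree hq, rfl,
    by simp, by simp, by simp,
    (adj (by omega) _).2 (by simp only; omega), (adj (by omega) _).2 (by simp only; omega),
    (adj (by omega) _).2 (by simp only; omega),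
    ncard_neighborSet_triangle hq (by omega), ncard_neighborSet_triangle hq (by omega),
    ncard_neighborSet_triangle hq (by omega)⟩
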